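/- Let L/K be a finite Galois extension of local fields of the form k((t))/k((x)) with k algebraically closed of characteristic p, with Galois group a p-group G, ramification groups G_i, e := #G₀ = #G, d := ∑_{i≥0}(#G_i − 1), and d' := ∑_{i≥1}(#G_i − 1). If z ∈ L satisfies ord_L(z) ≥ −d', then tr_{L/K}(z) ∈ k[[x]]; moreover tr_{L/K}(z) is a unit in k[[x]] if and only if ord_L(z) = −d'. -/

import Mathlib

/-!
Let `w` be the valuation of `L`, `t` a uniformizer and `e = [L : K]`. Since the summands of
`∑ cᵢ tⁱ` (`i < e`) have valuations `e · ord(cᵢ) + i` that are pairwise distinct modulo `e`,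
`1, t, …, t^(e-1)` is a power basis and `w (∑ cᵢ tⁱ) = minᵢ (e · ord(cᵢ) + i)`. Expanding
`σ f - f` in this basis shows `σ ∈ G_i ↔ w (σ t - t) ≥ i + 1`, and counting gives Hilbert's
formula `w (f'(t)) = ∑_{σ ≠ 1} w (σ t - t) = d` for the minimal polynomial `f` of `t`.
By Euler's lemma `tr (z) = tr (y / f'(t))` is the coefficient `c` of `t^(e-1)` in `y = z f'(t)`,
and `w y = ord_L z + d' + e - 1 ≥ e - 1`. As `e · ord(c) + e - 1 ≥ w y`, `c` is integral, and it
is a unit iff the minimum `w y` equals `e - 1`, i.e. iff `ord_L z = -d'`.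
-/

open Polynomial Module
open scoped Finset

section IntValuation

variable {L : Type*} [Field L] (v : L → ℤ)
  (hmul : ∀ a b : L, a ≠ 0 → b ≠ 0 → v (a * b) = v a + v b)
  (hmin : ∀ a b : L, a ≠ 0 → b ≠ 0 → a + b ≠ 0 → min (v a) (v b) ≤ v (a + b))

open Classical in
noncomputable def intAddValuation : AddValuation L (WithTop ℤ) :=
  AddValuation.of (fun a => if a = 0 then ⊤ else (v a : WithTop ℤ)) (by simp)
    (by
      have h := hmul 1 1 one_ne_zero one_ne_zero
      rw [mul_one, left_eq_add] at h
      simp [h])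
    (by
      intro a b
      by_cases ha : a = 0
      · simp [ha]
      by_cases hb : b = 0
      · simp [hb]
      by_cases hab : a + b = 0
      · simp [hab]
      simp only [ha, hb, hab, if_false]
      exact_mod_cast hmin a b ha hb hab)
    (by
      intro a b
      by_cases ha : a = 0
      · simp [ha]
      by_cases hb : b = 0
      · simp [hb]
      simp only [ha, hb, mul_ne_zero ha hb, if_false]
      exact_mod_cast hmul a b ha hb)

variable {v hmul hmin} in
theorem intAddValuation_of_ne_zero {a : L} (ha : a ≠ 0) :
    intAddValuation v hmul hmin a = v a :=
  if_neg ha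

variable {v hmul hmin} in
theorem coe_le_intAddValuation_iff {a : L} {n : ℤ} :
    (n : WithTop ℤ) ≤ intAddValuation v hmul hmin a ↔ a = 0 ∨ n ≤ v a := by
  by_cases ha : a = 0
  · simp [ha]
  · simp [ha, intAddValuation_of_ne_zero ha]

theorem exists_intAddValuation_eq_one (hsurj : Function.Surjective v) :
    ∃ t, intAddValuation v hmul hmin t = 1 := by
  obtain ⟨a, ha⟩ := hsurj 1
  by_cases ha0 : a = 0
  -- `v 0` is unconstrained, so the preimage of `1` may be `0`.
  · subst ha0
    obtain ⟨b, hb⟩ := hsurj 2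
    obtain ⟨c, hc⟩ := hsurj (-1)
    have hb0 : b ≠ 0 := by rintro rfl; omega
    have hc0 : c ≠ 0 := by rintro rfl; omega
    refine ⟨b * c, ?_⟩
    rw [AddValuation.map_mul, intAddValuation_of_ne_zero hb0, intAddValuation_of_ne_zero hc0, hb,
      hc]
    rfl
  · exact ⟨a, by rw [intAddValuation_of_ne_zero ha0, ha]; rfl⟩

end IntValuation

theorem AddValuation.map_sum_eq_inf {R Γ ι : Type*} [Ring R] [LinearOrderedAddCommMonoidWithTop Γ]
    (v : AddValuation R Γ) (s : Finset ι) (f : ι → R)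
    (hf : ∀ i ∈ s, ∀ j ∈ s, v (f i) = v (f j) → v (f i) ≠ ⊤ → i = j) :
    v (∑ i ∈ s, f i) = s.inf fun i => v (f i) := by
  classical
  refine le_antisymm ?_ (v.map_le_sum fun i hi => Finset.inf_le hi)
  rcases s.eq_empty_or_nonempty with rfl | hs
  · simp
  obtain ⟨j, hj, hinf⟩ := s.exists_mem_eq_inf hs fun i => v (f i)
  rcases eq_or_ne (v (f j)) ⊤ with htop | htop
  · simp [hinf, htop]
  have hlt : ∀ i ∈ s.erase j, v (f j) < v (f i) := fun i hi =>
    lt_of_le_of_ne (hinf ▸ Finset.inf_le (Finset.mem_of_mem_erase hi))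
      fun h => Finset.ne_of_mem_erase hi (hf j hj i (Finset.mem_of_mem_erase hi) h htop).symm
  rw [← Finset.add_sum_erase s f hj, v.map_add_eq_of_lt_left (v.map_lt_sum htop hlt), hinf]

theorem AddValuation.map_prod {R Γ ι : Type*} [CommRing R] [LinearOrderedAddCommMonoidWithTop Γ]
    (v : AddValuation R Γ) (s : Finset ι) (f : ι → R) :
    v (∏ i ∈ s, f i) = ∑ i ∈ s, v (f i) := by
  classical
  induction s using Finset.induction_on with
  | empty => simp
  | insert a s ha ih => rw [Finset.prod_insert ha, Finset.sum_insert ha, v.map_mul, ih]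

theorem WithTop.nsmul_eq_top_iff {α : Type*} [AddMonoid α] {n : ℕ} (hn : n ≠ 0) {a : WithTop α} :
    n • a = ⊤ ↔ a = ⊤ := by
  induction a using WithTop.recTopCoe with
  | top =>
    obtain ⟨m, rfl⟩ := Nat.exists_eq_succ_of_ne_zero hn
    simp [succ_nsmul]
  | coe a => simp [← WithTop.coe_nsmul]

theorem Int.eq_of_mul_add_eq_mul_add {n : ℕ} {a b : ℤ} {i j : ℕ} (hi : i < n) (hj : j < n)
    (h : n * a + i = n * b + j) : a = b ∧ i = j := by
  have hab : a = b := by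
    rcases lt_trichotomy a b with hlt | heq | hgt
    · nlinarith
    · exact heq
    · nlinarith
  subst hab
  omega

theorem WithTop.eq_of_nsmul_add_eq_nsmul_add {n : ℕ} {a b : WithTop ℤ} {i j : ℕ} (hi : i < n)
    (hj : j < n) (h : n • a + i = n • b + j) (htop : n • a + i ≠ ⊤) : a = b ∧ i = j := by
  have hn : n ≠ 0 := by omega
  have ha : a ≠ ⊤ := fun ha => htop (by simp [ha, WithTop.nsmul_eq_top_iff hn])
  have hb : b ≠ ⊤ := fun hb => htop (by simp [h, hb, WithTop.nsmul_eq_top_iff hn])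
  lift a to ℤ using ha
  lift b to ℤ using hb
  have h' : n * a + i = n * b + j := by
    rw [← WithTop.coe_nsmul, ← WithTop.coe_nsmul, ← WithTop.coe_natCast, ← WithTop.coe_natCast,
      ← WithTop.coe_add, ← WithTop.coe_add, WithTop.coe_inj, nsmul_eq_mul, nsmul_eq_mul] at h
    exact h
  simpa using Int.eq_of_mul_add_eq_mul_add hi hj h'

theorem WithTop.nonneg_of_nonneg_nsmul_add {n : ℕ} {a : WithTop ℤ} {i : ℕ} (hi : i < n)
    (h : 0 ≤ n • a + i) : 0 ≤ a := by
  induction a using WithTop.recTopCoe with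
  | top => exact le_top
  | coe a =>
    have h' : 0 ≤ n * a + i := by
      rw [← WithTop.coe_nsmul, ← WithTop.coe_natCast, ← WithTop.coe_add, ← WithTop.coe_zero,
        WithTop.coe_le_coe, nsmul_eq_mul] at h
      exact h
    have : 0 ≤ a := by nlinarith
    exact_mod_cast this

section Uniformizer

variable {K L : Type*} [Field K] [Field L] [Algebra K L]
  {vK : AddValuation K (WithTop ℤ)} {w : AddValuation L (WithTop ℤ)} {e : ℕ}
  (hext : ∀ c, w (algebraMap K L c) = e • vK c) {t : L} (ht : w t = 1)
include hext ht

theorem val_algebraMap_mul_pow (c : K) (i : ℕ) :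
    w (algebraMap K L c * t ^ i) = e • vK c + i := by
  rw [w.map_mul, w.map_pow, hext, ht, nsmul_one]

theorem val_sum_algebraMap_mul_pow (c : Fin e → K) :
    w (∑ i, algebraMap K L (c i) * t ^ (i : ℕ)) =
      Finset.univ.inf fun i => e • vK (c i) + (i : ℕ) := by
  rw [w.map_sum_eq_inf]
  · simp only [val_algebraMap_mul_pow hext ht]
  · intro i _ j _ h htop
    simp only [val_algebraMap_mul_pow hext ht] at h htop
    exact Fin.ext (WithTop.eq_of_nsmul_add_eq_nsmul_add i.isLt j.isLt h htop).2

theorem linearIndependent_pow_of_val_eq_one :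
    LinearIndependent K fun i : Fin e => t ^ (i : ℕ) := by
  rw [Fintype.linearIndependent_iff]
  intro g hg i
  have h := congrArg w hg
  simp only [Algebra.smul_def, val_sum_algebraMap_mul_pow hext ht, AddValuation.map_zero,
    Finset.inf_eq_top_iff, Finset.mem_univ, true_implies] at h
  rw [← vK.top_iff, ← WithTop.nsmul_eq_top_iff (Fin.pos i).ne']
  exact (WithTop.add_eq_top.mp (h i)).resolve_right (WithTop.natCast_ne_top _)

end Uniformizer

noncomputable def powerBasisOfValEqOne {K L : Type*} [Field K] [Field L] [Algebra K L]
    [FiniteDimensional K L] {vK : AddValuation K (WithTop ℤ)} {w : AddValuation L (WithTop ℤ)}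
    (hext : ∀ c, w (algebraMap K L c) = finrank K L • vK c) {t : L} (ht : w t = 1) :
    PowerBasis K L :=
  haveI : Nonempty (Fin (finrank K L)) := ⟨⟨0, finrank_pos⟩⟩
  { gen := t
    dim := finrank K L
    basis := basisOfLinearIndependentOfCardEqFinrank
      (linearIndependent_pow_of_val_eq_one hext ht) (Fintype.card_fin _)
    basis_eq_pow := by simp }

section Different

variable {K L : Type*} [Field K] [Field L] [Algebra K L] [FiniteDimensional K L]

theorem PowerBasis.trace_div_aeval_derivative_minpoly [Algebra.IsSeparable K L]
    (pb : PowerBasis K L) (y : L) :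
    Algebra.trace K L (y / aeval pb.gen (derivative (minpoly K pb.gen))) =
      pb.basis.repr y ⟨pb.dim - 1, Nat.sub_one_lt pb.dim_pos.ne'⟩ := by
  set last : Fin pb.dim := ⟨pb.dim - 1, Nat.sub_one_lt pb.dim_pos.ne'⟩
  have hcoeff : (minpolyDiv K pb.gen).coeff (pb.dim - 1) = 1 := by
    have hmonic := minpolyDiv_monic (Algebra.IsIntegral.isIntegral (R := K) pb.gen)
    rwa [Monic, leadingCoeff, natDegree_minpolyDiv, pb.natDegree_minpoly] at hmonic
  have hdual := Module.Basis.traceDual_powerBasis_eq pb last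
  rw [hcoeff] at hdual
  rw [← pb.basis.traceDual_traceDual, Module.Basis.traceDual_repr_apply, Algebra.traceForm_apply,
    hdual, div_eq_mul_one_div]

theorem PowerBasis.aeval_derivative_minpoly_eq_prod [IsGalois K L] [DecidableEq (L ≃ₐ[K] L)]
    (pb : PowerBasis K L) :
    aeval pb.gen (derivative (minpoly K pb.gen)) =
      ∏ σ ∈ Finset.univ.erase (1 : L ≃ₐ[K] L), (pb.gen - σ pb.gen) := by
  classical
  set f := (minpoly K pb.gen).map (algebraMap K L)
  set conj : (L ≃ₐ[K] L) → L := fun σ => σ pb.gen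
  have hinj : Function.Injective conj := fun σ τ h =>
    AlgEquiv.coe_toAlgHom_injective (pb.algHom_ext h)
  have hroots : f.roots = Finset.univ.val.map conj := by
    refine (Multiset.eq_of_le_of_card_le ?_ ?_).symm
    · refine (Multiset.le_iff_subset (Finset.univ.nodup.map hinj)).mpr fun a ha => ?_
      obtain ⟨σ, -, rfl⟩ := Multiset.mem_map.mp ha
      rw [mem_roots_map (minpoly.ne_zero (Algebra.IsIntegral.isIntegral pb.gen)), ← aeval_def,
        aeval_algHom_apply, minpoly.aeval, map_zero]
    · rw [Multiset.card_map, Finset.card_val, Finset.card_univ, ← Nat.card_eq_fintype_card,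
        IsGalois.card_aut_eq_finrank, pb.finrank, ← pb.natDegree_minpoly]
      exact (card_roots' f).trans natDegree_map_le
  have hcard : f.roots.card = f.natDegree := by
    rw [hroots, natDegree_map, pb.natDegree_minpoly, ← pb.finrank, ← IsGalois.card_aut_eq_finrank,
      Nat.card_eq_fintype_card, Multiset.card_map, Finset.card_val, Finset.card_univ]
  have hprod := prod_multiset_X_sub_C_of_monic_of_roots_card_eq
    ((minpoly.monic (Algebra.IsIntegral.isIntegral pb.gen)).map (algebraMap K L)) hcard
  have hmem : pb.gen ∈ Finset.univ.val.map conj := Multiset.mem_map.mpr ⟨1, by simp, rfl⟩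
  rw [← eval_map_algebraMap, ← derivative_map, ← hprod, hroots,
    eval_multiset_prod_X_sub_C_derivative hmem, Finset.prod_eq_multiset_prod, Finset.erase_val,
    ← show conj 1 = pb.gen from rfl, ← Multiset.map_erase conj hinj, Multiset.map_map]
  rfl

end Different

section PowerBasis

variable {K L : Type*} [Field K] [Field L] [Algebra K L]
  {vK : AddValuation K (WithTop ℤ)} {w : AddValuation L (WithTop ℤ)} (pb : PowerBasis K L)
  (hext : ∀ c, w (algebraMap K L c) = pb.dim • vK c) (hgen : w pb.gen = 1)
include hext hgen

theorem val_eq_inf_repr (y : L) :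
    w y = Finset.univ.inf fun i => pb.dim • vK (pb.basis.repr y i) + (i : ℕ) := by
  conv_lhs => rw [← pb.basis.sum_repr y]
  simp only [PowerBasis.coe_basis, Algebra.smul_def]
  exact val_sum_algebraMap_mul_pow hext hgen _

theorem val_repr_nonneg_of_nonneg {y : L} (hy : 0 ≤ w y) (i : Fin pb.dim) :
    0 ≤ vK (pb.basis.repr y i) := by
  rw [val_eq_inf_repr pb hext hgen, Finset.le_inf_iff] at hy
  exact WithTop.nonneg_of_nonneg_nsmul_add i.isLt (hy i (Finset.mem_univ i))

theorem val_repr_last_nonneg_and_eq_zero_iff {y : L} (hy : ((pb.dim - 1 : ℕ) : WithTop ℤ) ≤ w y) :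
    0 ≤ vK (pb.basis.repr y ⟨pb.dim - 1, Nat.sub_one_lt pb.dim_pos.ne'⟩) ∧
      (vK (pb.basis.repr y ⟨pb.dim - 1, Nat.sub_one_lt pb.dim_pos.ne'⟩) = 0 ↔
        w y = (pb.dim - 1 : ℕ)) := by
  set last : Fin pb.dim := ⟨pb.dim - 1, Nat.sub_one_lt pb.dim_pos.ne'⟩
  have hle : w y ≤ pb.dim • vK (pb.basis.repr y last) + (pb.dim - 1 : ℕ) :=
    val_eq_inf_repr pb hext hgen y ▸ Finset.inf_le (Finset.mem_univ last)
  refine ⟨WithTop.nonneg_of_nonneg_nsmul_add last.isLt (le_trans (by simp) (hy.trans hle)),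
    fun h0 => le_antisymm (by simpa [h0] using hle) hy, fun hyn => ?_⟩
  obtain ⟨j, -, hj⟩ := Finset.univ.exists_mem_eq_inf ⟨last, Finset.mem_univ _⟩ fun i =>
    pb.dim • vK (pb.basis.repr y i) + (i : ℕ)
  rw [← val_eq_inf_repr pb hext hgen, hyn] at hj
  obtain ⟨h0, hjn⟩ := WithTop.eq_of_nsmul_add_eq_nsmul_add (a := 0) last.isLt j.isLt
    (by simpa using hj) (by simp)
  rwa [show last = j from Fin.ext hjn, eq_comm]

theorem val_trace_nonneg_and_eq_zero_iff [FiniteDimensional K L] [Algebra.IsSeparable K L]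
    {z : L} (hz : ((pb.dim - 1 : ℕ) : WithTop ℤ) ≤
      w z + w (aeval pb.gen (derivative (minpoly K pb.gen)))) :
    0 ≤ vK (Algebra.trace K L z) ∧ (vK (Algebra.trace K L z) = 0 ↔
      w z + w (aeval pb.gen (derivative (minpoly K pb.gen))) = (pb.dim - 1 : ℕ)) := by
  have hD : aeval pb.gen (derivative (minpoly K pb.gen)) ≠ 0 :=
    (Algebra.IsSeparable.isSeparable K pb.gen).aeval_derivative_ne_zero (minpoly.aeval K pb.gen)
  have h := val_repr_last_nonneg_and_eq_zero_iff pb hext hgen (y := z * _) (by rwa [w.map_mul])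
  rwa [← pb.trace_div_aeval_derivative_minpoly, mul_div_cancel_right₀ z hD, w.map_mul] at h

end PowerBasis

theorem sum_Icc_ite_add_one_le {N : ℕ} {x : ℤ} (h0 : 0 ≤ x) (hN : x ≤ N + 1) :
    ∑ i ∈ Finset.Icc 0 N, (if ((i + 1 : ℤ) : WithTop ℤ) ≤ x then 1 else 0 : WithTop ℤ) = x := by
  have : (Finset.Icc 0 N).filter (fun i : ℕ => ((i + 1 : ℤ) : WithTop ℤ) ≤ x) =
      Finset.range x.toNat := by
    ext i
    simp only [Finset.mem_filter, Finset.mem_Icc, Finset.mem_range, WithTop.coe_le_coe]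
    omega
  rw [← Finset.sum_filter, this, Finset.sum_const, Finset.card_range, nsmul_one,
    ← WithTop.coe_natCast, Int.toNat_of_nonneg h0]

theorem Finset.sum_Icc_card_filter_le {α : Type*} (s : Finset α) (m : α → WithTop ℤ) (N : ℕ)
    (hm : ∀ a ∈ s, 0 ≤ m a ∧ m a ≤ ((N + 1 : ℤ) : WithTop ℤ)) :
    ∑ i ∈ Icc 0 N, (#{a ∈ s | ((i + 1 : ℤ) : WithTop ℤ) ≤ m a} : WithTop ℤ) = ∑ a ∈ s, m a := by
  simp only [Finset.card_filter, Nat.cast_sum, Nat.cast_ite, Nat.cast_one, Nat.cast_zero]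
  rw [Finset.sum_comm]
  refine Finset.sum_congr rfl fun a ha => ?_
  obtain ⟨h0, hN⟩ := hm a ha
  lift m a to ℤ using ne_top_of_le_ne_top WithTop.coe_ne_top hN with x
  exact sum_Icc_ite_add_one_le (WithTop.coe_nonneg.mp h0) (WithTop.coe_le_coe.mp hN)

section Ramification

variable (K : Type*) {L : Type*} [Field K] [Field L] [Algebra K L]

def lowerRamificationGroup (w : AddValuation L (WithTop ℤ)) (i : ℕ) : Set (L ≃ₐ[K] L) :=
  {σ | ∀ f, 0 ≤ w f → ((i + 1 : ℤ) : WithTop ℤ) ≤ w (σ f - f)}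

theorem lowerRamificationGroup_intAddValuation (v : L → ℤ)
    (hmul : ∀ a b : L, a ≠ 0 → b ≠ 0 → v (a * b) = v a + v b)
    (hmin : ∀ a b : L, a ≠ 0 → b ≠ 0 → a + b ≠ 0 → min (v a) (v b) ≤ v (a + b)) (i : ℕ) :
    lowerRamificationGroup K (intAddValuation v hmul hmin) i =
      {σ | ∀ f, 0 ≤ v f → σ f - f = 0 ∨ (i : ℤ) + 1 ≤ v (σ f - f)} := by
  ext σ
  refine forall_congr' fun f => ?_
  by_cases hf : f = 0
  · simp [hf]
  rw [coe_le_intAddValuation_iff, intAddValuation_of_ne_zero hf, WithTop.coe_nonneg]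

variable {K} {vK : AddValuation K (WithTop ℤ)} {w : AddValuation L (WithTop ℤ)}
  (pb : PowerBasis K L) (hext : ∀ c, w (algebraMap K L c) = pb.dim • vK c) (hgen : w pb.gen = 1)
  (hG0 : ∀ σ, σ ∈ lowerRamificationGroup K w 0)
include hext hgen hG0

theorem val_sub_gen_le_val_sub (σ : L ≃ₐ[K] L) {f : L} (hf : 0 ≤ w f) :
    w (σ pb.gen - pb.gen) ≤ w (σ f - f) := by
  have hσgen : 0 ≤ w (σ pb.gen) := by
    rw [← add_sub_cancel pb.gen (σ pb.gen)]
    refine w.map_le_add (by simp [hgen]) (le_trans ?_ (hG0 σ pb.gen (by simp [hgen])))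
    simp
  have hdiff : σ f - f = ∑ i : Fin pb.dim, algebraMap K L (pb.basis.repr f i) *
      ((∑ m ∈ Finset.range i, σ pb.gen ^ m * pb.gen ^ (i - 1 - m)) * (σ pb.gen - pb.gen)) := by
    conv_lhs => rw [← pb.basis.sum_repr f]
    rw [map_sum, ← Finset.sum_sub_distrib]
    refine Finset.sum_congr rfl fun i _ => ?_
    rw [geom_sum₂_mul, pb.basis_eq_pow, Algebra.smul_def, map_mul, AlgEquiv.commutes, map_pow,
      mul_sub]
  rw [hdiff]
  refine w.map_le_sum fun i _ => ?_
  rw [w.map_mul, w.map_mul, ← add_assoc]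
  refine le_add_of_nonneg_left (add_nonneg ?_ (w.map_le_sum fun m _ => ?_))
  · rw [hext]
    exact nsmul_nonneg (val_repr_nonneg_of_nonneg pb hext hgen hf i) _
  · rw [w.map_mul, w.map_pow, w.map_pow, hgen]
    exact add_nonneg (nsmul_nonneg hσgen _) (nsmul_nonneg zero_le_one _)

theorem mem_lowerRamificationGroup_iff (σ : L ≃ₐ[K] L) (i : ℕ) :
    σ ∈ lowerRamificationGroup K w i ↔ ((i + 1 : ℤ) : WithTop ℤ) ≤ w (σ pb.gen - pb.gen) :=
  ⟨fun h => h pb.gen (by simp [hgen]),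
    fun h _ hf => h.trans (val_sub_gen_le_val_sub pb hext hgen hG0 σ hf)⟩

theorem val_aeval_derivative_minpoly [FiniteDimensional K L] [IsGalois K L] (N : ℕ)
    (hN : lowerRamificationGroup K w (N + 1) = {1}) :
    w (aeval pb.gen (derivative (minpoly K pb.gen))) =
      ((∑ i ∈ Finset.Icc 0 N, ((Nat.card (lowerRamificationGroup K w i) : ℤ) - 1) : ℤ) :
        WithTop ℤ) := by
  classical
  have hcard : ∀ i : ℕ, (Nat.card (lowerRamificationGroup K w i) : ℤ) - 1 =
      #{σ ∈ Finset.univ.erase (1 : L ≃ₐ[K] L) |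
        ((i + 1 : ℤ) : WithTop ℤ) ≤ w (σ pb.gen - pb.gen)} := by
    intro i
    have hset : lowerRamificationGroup K w i =
        ↑({σ | ((i + 1 : ℤ) : WithTop ℤ) ≤ w (σ pb.gen - pb.gen)} : Finset (L ≃ₐ[K] L)) :=
      Set.ext fun σ => by
        rw [Finset.coe_filter, Set.mem_ofPred_eq, mem_lowerRamificationGroup_iff pb hext hgen hG0]
        exact (and_iff_right (Finset.mem_univ σ)).symm
    have hone : (1 : L ≃ₐ[K] L) ∈
        ({σ | ((i + 1 : ℤ) : WithTop ℤ) ≤ w (σ pb.gen - pb.gen)} : Finset (L ≃ₐ[K] L)) := by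
      rw [Finset.mem_filter]
      simp
    rw [hset, Nat.card_coe_set_eq, Set.ncard_coe_finset, Finset.filter_erase,
      Finset.card_erase_of_mem hone, Nat.cast_sub (Finset.card_pos.mpr ⟨1, hone⟩), Nat.cast_one]
  have hbounds : ∀ σ ∈ Finset.univ.erase (1 : L ≃ₐ[K] L),
      0 ≤ w (σ pb.gen - pb.gen) ∧ w (σ pb.gen - pb.gen) ≤ ((N + 1 : ℤ) : WithTop ℤ) := by
    intro σ hσ
    have hσ1 : σ ≠ 1 := Finset.ne_of_mem_erase hσ
    have hlow := (mem_lowerRamificationGroup_iff pb hext hgen hG0 σ 0).mp (hG0 σ)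
    have hhigh : σ ∉ lowerRamificationGroup K w (N + 1) := by simpa [hN] using hσ1
    rw [mem_lowerRamificationGroup_iff pb hext hgen hG0, not_le] at hhigh
    lift w (σ pb.gen - pb.gen) to ℤ using (hhigh.trans (WithTop.coe_lt_top _)).ne with x
    norm_cast at hlow hhigh ⊢
    omega
  rw [pb.aeval_derivative_minpoly_eq_prod, w.map_prod, WithTop.coe_sum]
  simp only [hcard, WithTop.coe_natCast]
  rw [Finset.sum_Icc_card_filter_le _ _ N hbounds]
  exact Finset.sum_congr rfl fun σ _ => w.map_sub_swap _ _

end Ramification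

theorem HahnSeries.coeff_zero_ne_zero_iff {Γ R : Type*} [LinearOrder Γ] [Zero Γ] [Zero R]
    {x : HahnSeries Γ R} (hx : 0 ≤ x.orderTop) : x.coeff 0 ≠ 0 ↔ x.orderTop = 0 :=
  ⟨fun h => le_antisymm (orderTop_le_of_coeff_ne_zero h) hx, coeff_orderTop_ne⟩

theorem intAddValuation_algebraMap_laurentSeries {k L : Type*} [Field k] [Field L]
    [Algebra (LaurentSeries k) L] {v : L → ℤ}
    {hmul : ∀ a b : L, a ≠ 0 → b ≠ 0 → v (a * b) = v a + v b}
    {hmin : ∀ a b : L, a ≠ 0 → b ≠ 0 → a + b ≠ 0 → min (v a) (v b) ≤ v (a + b)} {n : ℕ}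
    (hn : n ≠ 0) (hext : ∀ f : LaurentSeries k, f ≠ 0 → v (algebraMap _ L f) = n * f.order)
    (c : LaurentSeries k) :
    intAddValuation v hmul hmin (algebraMap _ L c) = n • HahnSeries.addVal ℤ k c := by
  by_cases hc : c = 0
  · simp only [hc, map_zero, AddValuation.map_zero]
    exact ((WithTop.nsmul_eq_top_iff hn).mpr rfl).symm
  rw [intAddValuation_of_ne_zero ((_root_.map_ne_zero _).mpr hc), hext c hc,
    HahnSeries.addVal_apply, ← HahnSeries.order_eq_orderTop_of_ne_zero hc, ← WithTop.coe_nsmul,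
    nsmul_eq_mul]

theorem stmt4_general (k : Type*) [Field k]
    (L : Type*) [Field L] [Algebra (LaurentSeries k) L]
    [FiniteDimensional (LaurentSeries k) L] [IsGalois (LaurentSeries k) L]
    -- ord_L, the normalized valuation of L:
    (ordL : L → ℤ)
    (hmul : ∀ a b : L, a ≠ 0 → b ≠ 0 → ordL (a * b) = ordL a + ordL b)
    (hmin : ∀ a b : L, a ≠ 0 → b ≠ 0 → a + b ≠ 0 → min (ordL a) (ordL b) ≤ ordL (a + b))
    (hsurj : Function.Surjective ordL)
    -- L/K is totally ramified: e = #G, ord_L extends e·ord_K: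
    (hext : ∀ f : LaurentSeries k, f ≠ 0 →
      ordL (algebraMap (LaurentSeries k) L f) =
        (Nat.card (L ≃ₐ[LaurentSeries k] L) : ℤ) * f.order)
    -- the ramification groups in lower numbering:
    (Gram : ℕ → Set (L ≃ₐ[LaurentSeries k] L))
    (hGdef : ∀ i, Gram i =
      {g | ∀ f : L, 0 ≤ ordL f → g f - f = 0 ∨ (i : ℤ) + 1 ≤ ordL (g f - f)})
    (hG0 : Gram 0 = Set.univ)
    (N : ℕ) (hN : ∀ i, N < i → Gram i = {1})
    (d d' : ℤ)
    (hd : d = ∑ i ∈ Finset.Icc 0 N, ((Nat.card ↥(Gram i) : ℤ) - 1))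
    (hd' : d' = ∑ i ∈ Finset.Icc 1 N, ((Nat.card ↥(Gram i) : ℤ) - 1))
    (z : L) (hz : z ≠ 0) (hzord : -d' ≤ ordL z) :
    (∀ i : ℤ, i < 0 → (Algebra.trace (LaurentSeries k) L z).coeff i = 0) ∧
    ((Algebra.trace (LaurentSeries k) L z).coeff 0 ≠ 0 ↔ ordL z = -d') := by
  set w := intAddValuation ordL hmul hmin
  have hwK := intAddValuation_algebraMap_laurentSeries (hmul := hmul) (hmin := hmin)
    Nat.card_pos.ne' hext
  rw [IsGalois.card_aut_eq_finrank] at hwK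
  obtain ⟨t, ht⟩ := exists_intAddValuation_eq_one ordL hmul hmin hsurj
  set pb := powerBasisOfValEqOne hwK ht
  have hGram : ∀ i, Gram i = lowerRamificationGroup _ w i := fun i => by
    rw [hGdef, lowerRamificationGroup_intAddValuation]
  have hG0' : ∀ σ, σ ∈ lowerRamificationGroup (LaurentSeries k) w 0 := by
    simp [← hGram, hG0]
  have hD : w (aeval pb.gen (derivative (minpoly (LaurentSeries k) pb.gen))) = d := by
    rw [val_aeval_derivative_minpoly pb hwK ht hG0' N (by rw [← hGram]; exact hN _ (by omega)),
      hd, funext hGram]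
  have hdd' : d = d' + ((pb.dim - 1 : ℕ) : ℤ) := by
    rw [hd, hd', ← Finset.insert_Icc_succ_left_eq_Icc (Nat.zero_le N),
      Finset.sum_insert (by simp), hG0, Nat.card_univ, IsGalois.card_aut_eq_finrank,
      Nat.cast_sub pb.dim_pos, Nat.cast_one, add_comm]
    rfl
  obtain ⟨hnonneg, hiff⟩ := val_trace_nonneg_and_eq_zero_iff pb hwK ht (z := z) (by
    rw [hD, intAddValuation_of_ne_zero hz]
    exact_mod_cast (by omega : ((pb.dim - 1 : ℕ) : ℤ) ≤ ordL z + d))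
  rw [HahnSeries.addVal_apply] at hnonneg hiff
  refine ⟨fun i hi => HahnSeries.coeff_eq_zero_of_lt_orderTop
    (lt_of_lt_of_le (by exact_mod_cast hi) hnonneg), ?_⟩
  rw [HahnSeries.coeff_zero_ne_zero_iff hnonneg, hiff, hD, intAddValuation_of_ne_zero hz]
  norm_cast
  omega

theorem stmt4 (p : ℕ) (hp : p.Prime) (k : Type*) [Field k] [IsAlgClosed k] [CharP k p]
    (L : Type*) [Field L] [Algebra (LaurentSeries k) L]
    [FiniteDimensional (LaurentSeries k) L] [IsGalois (LaurentSeries k) L]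
    -- the Galois group is a p-group:
    (hpgroup : ∃ n : ℕ, Nat.card (L ≃ₐ[LaurentSeries k] L) = p ^ n)
    -- ord_L, the normalized valuation of L:
    (ordL : L → ℤ)
    (hmul : ∀ a b : L, a ≠ 0 → b ≠ 0 → ordL (a * b) = ordL a + ordL b)
    (hmin : ∀ a b : L, a ≠ 0 → b ≠ 0 → a + b ≠ 0 → min (ordL a) (ordL b) ≤ ordL (a + b))
    (hsurj : Function.Surjective ordL)
    -- L/K is totally ramified: e = #G, ord_L extends e·ord_K:
    (hext : ∀ f : LaurentSeries k, f ≠ 0 →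
      ordL (algebraMap (LaurentSeries k) L f) =
        (Nat.card (L ≃ₐ[LaurentSeries k] L) : ℤ) * f.order)
    -- the ramification groups in lower numbering:
    (Gram : ℕ → Set (L ≃ₐ[LaurentSeries k] L))
    (hGdef : ∀ i, Gram i =
      {g | ∀ f : L, 0 ≤ ordL f → g f - f = 0 ∨ (i : ℤ) + 1 ≤ ordL (g f - f)})
    (hG0 : Gram 0 = Set.univ)
    (N : ℕ) (hN : ∀ i, N < i → Gram i = {1})
    (e d d' : ℤ)
    (he : e = (Nat.card (L ≃ₐ[LaurentSeries k] L) : ℤ))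
    (hd : d = ∑ i ∈ Finset.Icc 0 N, ((Nat.card ↥(Gram i) : ℤ) - 1))
    (hd' : d' = ∑ i ∈ Finset.Icc 1 N, ((Nat.card ↥(Gram i) : ℤ) - 1))
    (z : L) (hz : z ≠ 0) (hzord : -d' ≤ ordL z) :
    (∀ i : ℤ, i < 0 → (Algebra.trace (LaurentSeries k) L z).coeff i = 0) ∧
    ((Algebra.trace (LaurentSeries k) L z).coeff 0 ≠ 0 ↔ ordL z = -d') :=
  stmt4_general k L ordL hmul hmin hsurj hext Gram hGdef hG0 N hN d d' hd hd' z hz hzord
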